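/- Let G be a digraph and a, b vertices of G. For each edge (i,j) of G with i ∈ N⁺(a) ∩ (N⁻(b) ∪ {b}) and j ∈ (N⁺(a) ∪ {a}) ∩ N⁻(b), the elementary 3-path e_{a i j b} belongs to Ω₃^{(a,b)}(G), and the family { e_{a i j b} : (i,j) ∈ E( N⁺(a) ∩ (N⁻(b) ∪ {b}), (N⁺(a) ∪ {a}) ∩ N⁻(b) ) } is linearly independent over K. -/

import Mathlib

/-!
Each of the four faces of `a → i → j → b` is either an arrow path of `G` or, when `j = a`
or `i = b`, irregular and hence zero in `R₂`; so `∂ e_{aijb}` is allowed. The paths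
`e_{aijb}` are distinct basis vectors of `Λ₃`, hence linearly independent.
-/

open scoped BigOperators
open Classical

/-- A digraph: an irreflexive relation on a vertex type. -/
structure Dgraph (V : Type*) where
  Adj : V → V → Prop
  loopless : ∀ v : V, ¬ Adj v v

/-- An elementary `p`-path on the vertex type `V`: a sequence of `p+1` vertices. -/
abbrev EPath (V : Type*) (p : ℕ) := Fin (p + 1) → V

/-- A path is regular if consecutive vertices are distinct. -/
def IsRegularPath {V : Type*} {p : ℕ} (f : EPath V p) : Prop :=
  ∀ k : Fin p, f k.castSucc ≠ f k.succ

/-- A path is allowed if consecutive vertices are joined by an arrow. -/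
def IsAllowedPath {V : Type*} (G : Dgraph V) {p : ℕ} (f : EPath V p) : Prop :=
  ∀ k : Fin p, G.Adj (f k.castSucc) (f k.succ)

/-- The projection of `Λ_p` onto its regular part; this realizes `R_p = Λ_p / I_p`
as the subspace of `Λ_p` spanned by the regular elementary paths. -/
noncomputable def regProj (K : Type*) [Field K] (V : Type*) (p : ℕ) :
    (EPath V p →₀ K) →ₗ[K] (EPath V p →₀ K) :=
  Finsupp.linearCombination K
    (fun f : EPath V p => if IsRegularPath f then Finsupp.single f (1 : K) else 0)

/-- The (non-reduced) boundary operator on `Λ`. -/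
noncomputable def bdryFull (K : Type*) [Field K] (V : Type*) (p : ℕ) :
    (EPath V (p + 1) →₀ K) →ₗ[K] (EPath V p →₀ K) :=
  Finsupp.linearCombination K
    (fun f : EPath V (p + 1) =>
      ∑ q : Fin (p + 2), ((-1 : K) ^ (q : ℕ)) • Finsupp.single (f ∘ q.succAbove) (1 : K))

/-- The boundary operator `∂` on the regular part (i.e. on `R`). -/
noncomputable def bdry (K : Type*) [Field K] (V : Type*) (p : ℕ) :
    (EPath V (p + 1) →₀ K) →ₗ[K] (EPath V p →₀ K) :=
  (regProj K V p).comp (bdryFull K V p)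

/-- The span of the regular elementary paths: the realization of `R_p` inside `Λ_p`. -/
noncomputable def regularMod (K : Type*) [Field K] (V : Type*) (p : ℕ) :
    Submodule K (EPath V p →₀ K) :=
  Submodule.span K {x | ∃ f : EPath V p, IsRegularPath f ∧ x = Finsupp.single f (1 : K)}

/-- `A_p(G)`: the span of the allowed elementary paths. -/
noncomputable def allowedMod (K : Type*) [Field K] (V : Type*) (G : Dgraph V) (p : ℕ) :
    Submodule K (EPath V p →₀ K) :=
  Submodule.span K {x | ∃ f : EPath V p, IsAllowedPath G f ∧ x = Finsupp.single f (1 : K)}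

/-- `Ω_p(G)`: the space of ∂-invariant `p`-paths. -/
noncomputable def Omega (K : Type*) [Field K] (V : Type*) (G : Dgraph V) :
    (p : ℕ) → Submodule K (EPath V p →₀ K)
  | 0 => allowedMod K V G 0
  | (p + 1) => allowedMod K V G (p + 1) ⊓ (allowedMod K V G p).comap (bdry K V p)

/-- An `(a,b)`-cluster: every elementary path occurring with nonzero coefficient
starts at `a` and ends at `b`. -/
def IsCluster {K : Type*} [Field K] {V : Type*} {p : ℕ} (a b : V) (ω : EPath V p →₀ K) : Prop :=
  ∀ f ∈ ω.support, f 0 = a ∧ f (Fin.last p) = b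

/-- A minimal ∂-invariant path: a nonzero element of `Ω_p` such that no nonzero
∂-invariant path is supported on a proper (nonempty) subset of its support. -/
def IsMinimal (K : Type*) [Field K] {V : Type*} (G : Dgraph V) (p : ℕ)
    (ω : EPath V p →₀ K) : Prop :=
  ω ∈ Omega K V G p ∧ ω ≠ 0 ∧
    ∀ ω' : EPath V p →₀ K, ω' ∈ Omega K V G p → ω' ≠ 0 → ¬ (ω'.support ⊂ ω.support)

/-- A digraph map: every arrow goes to an arrow or collapses to a vertex. -/
structure DgraphMap {V W : Type*} (X : Dgraph V) (Y : Dgraph W) where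
  toFun : V → W
  map_adj : ∀ ⦃u v : V⦄, X.Adj u v → Y.Adj (toFun u) (toFun v) ∨ toFun u = toFun v

/-- The induced map `f_* : R_n(X) → R_n(Y)` (in the regular-part realization):
push forward elementary paths and kill the irregular ones. -/
noncomputable def inducedMap (K : Type*) [Field K] {V W : Type*} (φ : V → W) (p : ℕ) :
    (EPath V p →₀ K) →ₗ[K] (EPath W p →₀ K) :=
  (regProj K W p).comp (Finsupp.lmapDomain K K (fun f : EPath V p => φ ∘ f))

/-- Cyclic successor on `Fin m`. -/
def finRot {m : ℕ} (k : Fin m) : Fin m := ⟨((k : ℕ) + 1) % m, Nat.mod_lt _ k.pos⟩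

/-- The vertices of the trapezohedron `T_m`. -/
inductive TVert (m : ℕ) : Type
  | a : TVert m
  | b : TVert m
  | vi : Fin m → TVert m
  | vj : Fin m → TVert m

/-- The adjacency relation of the trapezohedron `T_m`:
`a → i_k`, `i_k → j_k`, `i_{k+1} → j_k`, `j_k → b` (indices mod `m`). -/
def TrapAdj (m : ℕ) : TVert m → TVert m → Prop
  | TVert.a, TVert.vi _ => True
  | TVert.vi k, TVert.vj l => k = l ∨ k = finRot l
  | TVert.vj _, TVert.b => True
  | _, _ => False

/-- The trapezohedron digraph `T_m`. -/
def Trap (m : ℕ) : Dgraph (TVert m) where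
  Adj := TrapAdj m
  loopless := by intro v h; cases v <;> exact h

/-- The trapezohedral path `τ_m`. -/
noncomputable def tau (K : Type*) [Field K] (m : ℕ) : EPath (TVert m) 3 →₀ K :=
  ∑ k : Fin m,
    (Finsupp.single ![TVert.a, TVert.vi k, TVert.vj k, TVert.b] (1 : K)
      - Finsupp.single ![TVert.a, TVert.vi (finRot k), TVert.vj k, TVert.b] (1 : K))

/-- The submodule of `(a,b)`-clusters. -/
def clusterMod (K : Type*) [Field K] (V : Type*) (p : ℕ) (a b : V) :
    Submodule K (EPath V p →₀ K) where
  carrier := {ω | ∀ f ∈ ω.support, f 0 = a ∧ f (Fin.last p) = b}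
  add_mem' := by
    intro x y hx hy f hf
    rcases Finset.mem_union.mp (Finsupp.support_add hf) with h | h
    exacts [hx f h, hy f h]
  zero_mem' := by intro f hf; simp at hf
  smul_mem' := by
    intro c x hx f hf
    exact hx f (Finsupp.support_smul hf)

/-- `Ω₃^{(a,b)}(G)`: the ∂-invariant `(a,b)`-clusters. -/
noncomputable def OmegaAB (K : Type*) [Field K] (V : Type*) (G : Dgraph V) (a b : V) :
    Submodule K (EPath V 3 →₀ K) :=
  Omega K V G 3 ⊓ clusterMod K V 3 a b

/-- Out-neighbourhood. -/
def Nplus {V : Type*} (G : Dgraph V) (v : V) : Set V := {w | G.Adj v w}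

/-- In-neighbourhood. -/
def Nminus {V : Type*} (G : Dgraph V) (v : V) : Set V := {w | G.Adj w v}

/-- `E(X,Y)`: the edges of `G` starting in `X` and ending in `Y`. -/
def Ebetween {V : Type*} (G : Dgraph V) (X Y : Set V) : Set (V × V) :=
  {p | p.1 ∈ X ∧ p.2 ∈ Y ∧ G.Adj p.1 p.2}

/-- `A = N⁺(a) \ {b}`. -/
def setA {V : Type*} (G : Dgraph V) (a b : V) : Set V := Nplus G a \ {b}

/-- `B = N⁻(b) \ {a}`. -/
def setB {V : Type*} (G : Dgraph V) (a b : V) : Set V := Nminus G b \ {a}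

/-- The vertex set of `H = Ind(A \ B, B \ A)`. -/
def Hverts {V : Type*} (G : Dgraph V) (a b : V) : Set V :=
  (setA G a b \ setB G a b) ∪ (setB G a b \ setA G a b)

/-- `H = Ind(A \ B, B \ A)` regarded as an undirected (simple) graph on its vertex set. -/
def Hgraph {V : Type*} (G : Dgraph V) (a b : V) : SimpleGraph (Hverts G a b) where
  Adj u v :=
    ((u : V) ∈ setA G a b \ setB G a b ∧ (v : V) ∈ setB G a b \ setA G a b ∧ G.Adj u v)
      ∨ ((v : V) ∈ setA G a b \ setB G a b ∧ (u : V) ∈ setB G a b \ setA G a b ∧ G.Adj v u)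
  symm := ⟨by intro u v h; exact h.symm⟩
  loopless := ⟨by
    intro u h
    rcases h with ⟨_, _, h3⟩ | ⟨_, _, h3⟩ <;> exact G.loopless _ h3⟩

/-- The set of vertices of `G` belonging to the connected component `c` of `H`. -/
def compVerts {V : Type*} (G : Dgraph V) (a b : V)
    (c : (Hgraph G a b).ConnectedComponent) : Set V :=
  {v | ∃ h : v ∈ Hverts G a b, (Hgraph G a b).connectedComponentMk ⟨v, h⟩ = c}

/-- The set `S_k` associated to a connected component of `H`. -/
def Sset {V : Type*} (G : Dgraph V) (a b : V)
    (c : (Hgraph G a b).ConnectedComponent) : Set (V × V) :=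
  Ebetween G (compVerts G a b c ∩ (setA G a b \ setB G a b))
      ((Nplus G a ∪ {a}) ∩ Nminus G b)
    ∪ Ebetween G (Nplus G a ∩ (Nminus G b ∪ {b}))
      (compVerts G a b c ∩ (setB G a b \ setA G a b))

section PathComplex

variable {K : Type*} [Field K] {V : Type*} {p : ℕ}

theorem regProj_single (f : EPath V p) (c : K) :
    regProj K V p (Finsupp.single f c) = if IsRegularPath f then Finsupp.single f c else 0 := by
  split_ifs <;> simp [regProj, *]

theorem bdry_single (f : EPath V (p + 1)) :
    bdry K V p (Finsupp.single f 1) =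
      ∑ q : Fin (p + 2), (-1 : K) ^ (q : ℕ) • regProj K V p (Finsupp.single (f ∘ q.succAbove) 1) := by
  simp only [bdry, bdryFull, LinearMap.comp_apply, Finsupp.linearCombination_single, one_smul,
    map_sum, map_smul]

theorem single_mem_allowedMod (G : Dgraph V) {f : EPath V p} (hf : IsAllowedPath G f) :
    Finsupp.single f (1 : K) ∈ allowedMod K V G p :=
  Submodule.subset_span ⟨f, hf, rfl⟩

theorem regProj_single_mem_allowedMod (G : Dgraph V) {f : EPath V p}
    (hf : IsRegularPath f → IsAllowedPath G f) :
    regProj K V p (Finsupp.single f 1) ∈ allowedMod K V G p := by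
  rw [regProj_single]
  split_ifs with hreg
  · exact single_mem_allowedMod G (hf hreg)
  · exact zero_mem _

theorem single_mem_Omega_succ (G : Dgraph V) {f : EPath V (p + 1)} (hf : IsAllowedPath G f)
    (hfaces : ∀ q : Fin (p + 2),
      IsRegularPath (f ∘ q.succAbove) → IsAllowedPath G (f ∘ q.succAbove)) :
    Finsupp.single f (1 : K) ∈ Omega K V G (p + 1) := by
  refine ⟨single_mem_allowedMod G hf, ?_⟩
  change bdry K V p (Finsupp.single f 1) ∈ allowedMod K V G p
  rw [bdry_single]
  exact Submodule.sum_mem _ fun q _ =>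
    Submodule.smul_mem _ _ (regProj_single_mem_allowedMod G (hfaces q))

theorem single_mem_clusterMod {a b : V} {f : EPath V p} (c : K) (h₀ : f 0 = a)
    (hlast : f (Fin.last p) = b) : Finsupp.single f c ∈ clusterMod K V p a b := by
  intro g hg
  obtain rfl := Finset.mem_singleton.1 (Finsupp.support_single_subset hg)
  exact ⟨h₀, hlast⟩

end PathComplex

section ThreePaths

variable {V : Type*} (G : Dgraph V)

theorem isRegularPath_vec3_iff {x y z : V} : IsRegularPath ![x, y, z] ↔ x ≠ y ∧ y ≠ z := by
  simp [IsRegularPath, Fin.forall_fin_two]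

theorem isAllowedPath_vec3_iff {x y z : V} :
    IsAllowedPath G ![x, y, z] ↔ G.Adj x y ∧ G.Adj y z := by
  simp [IsAllowedPath, Fin.forall_fin_two]

theorem isAllowedPath_vec4_iff {w x y z : V} :
    IsAllowedPath G ![w, x, y, z] ↔ G.Adj w x ∧ G.Adj x y ∧ G.Adj y z := by
  simp [IsAllowedPath, Fin.forall_fin_succ]

theorem forall_faces_vec4_iff (P : EPath V 2 → Prop) {w x y z : V} :
    (∀ q : Fin 4, P (![w, x, y, z] ∘ q.succAbove)) ↔
      P ![x, y, z] ∧ P ![w, y, z] ∧ P ![w, x, z] ∧ P ![w, x, y] := by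
  have face : ∀ q : Fin 4, ![w, x, y, z] ∘ q.succAbove =
      ![![x, y, z], ![w, y, z], ![w, x, z], ![w, x, y]] q := by
    intro q; ext k; fin_cases q <;> fin_cases k <;> rfl
  simp [face, Fin.forall_fin_succ]

theorem single_vec4_mem_Omega (K : Type*) [Field K] {a i j b : V} (hai : G.Adj a i)
    (hij : G.Adj i j) (hjb : G.Adj j b) (hib : G.Adj i b ∨ i = b) (haj : G.Adj a j ∨ j = a) :
    Finsupp.single ![a, i, j, b] (1 : K) ∈ Omega K V G 3 := by
  refine single_mem_Omega_succ G ((isAllowedPath_vec4_iff G).2 ⟨hai, hij, hjb⟩) ?_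
  simp only [forall_faces_vec4_iff (fun f => IsRegularPath f → IsAllowedPath G f),
    isRegularPath_vec3_iff, isAllowedPath_vec3_iff]
  refine ⟨fun _ => ⟨hij, hjb⟩, fun h => ⟨haj.resolve_right h.1.symm, hjb⟩,
    fun h => ⟨hai, hib.resolve_right h.2⟩, fun _ => ⟨hai, hij⟩⟩

end ThreePaths

theorem statement16 (K : Type*) [Field K] {V : Type*} (G : Dgraph V) (a b : V) :
    (∀ i j : V,
        (i, j) ∈ Ebetween G (Nplus G a ∩ (Nminus G b ∪ {b}))
            ((Nplus G a ∪ {a}) ∩ Nminus G b) →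
        Finsupp.single ![a, i, j, b] (1 : K) ∈ OmegaAB K V G a b) ∧
    LinearIndependent K
      (fun e : ↥(Ebetween G (Nplus G a ∩ (Nminus G b ∪ {b}))
                  ((Nplus G a ∪ {a}) ∩ Nminus G b)) =>
        Finsupp.single ![a, (e : V × V).1, (e : V × V).2, b] (1 : K)) := by
  refine ⟨?_, ?_⟩
  · rintro i j ⟨⟨hai, hib⟩, ⟨haj, hjb⟩, hij⟩
    exact ⟨single_vec4_mem_Omega G K hai hij hjb hib haj, single_mem_clusterMod 1 rfl rfl⟩
  · refine (Finsupp.linearIndependent_single_one K (EPath V 3)).comp _ fun e e' h => ?_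
    exact Subtype.ext (Prod.ext (congrFun h 1) (congrFun h 2))
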